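/- Let n, m, k : ℕ with 1 ≤ k and k + 1 ≤ 2^m, and let E : V_n → V_n → Prop be the edge relation of a succinctly represented graph on vertex set V_n. Then there exists a function g : V_n → V_m satisfying (V1) for all a, b ∈ V_n, if g a = g b and num(g a) < k then a = b, and (V2) for all a, b ∈ V_n, if E a b then num(g a) < k or num(g b) < k, if and only if the graph has a vertex cover of size at most k, i.e., there exists a finite set W ⊆ V_n with |W| ≤ k such that for all a, b ∈ V_n with E a b, a ∈ W or b ∈ W. -/
import Mathlib


/-- `num v` is the number encoded by the boolean vector `v`. -/
def num {n : ℕ} (v : Fin n → Bool) : ℕ :=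
  ∑ i : Fin n, 2 ^ (i : ℕ) * (if v i then 1 else 0)

/-- The equivalence between boolean vectors and `Fin (2^m)` underlying `num`. -/
noncomputable def numEquiv (m : ℕ) : (Fin m → Bool) ≃ Fin (2 ^ m) :=
  (Equiv.arrowCongr (Equiv.refl _) finTwoEquiv.symm).trans finFunctionFinEquiv

lemma num_eq_numEquiv {m : ℕ} (v : Fin m → Bool) : num v = (numEquiv m v : ℕ) := by
  simp only [numEquiv, Equiv.trans_apply, finFunctionFinEquiv_apply, num]
  refine Finset.sum_congr rfl fun i _ => ?_
  cases h : v i <;> simp [Equiv.arrowCongr, finTwoEquiv, h, mul_comm]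

lemma num_numEquiv_symm {m : ℕ} (x : Fin (2 ^ m)) : num ((numEquiv m).symm x) = (x : ℕ) := by
  rw [num_eq_numEquiv, Equiv.apply_symm_apply]

theorem stmt_3 (n m k : ℕ) (hk : 1 ≤ k) (hk2 : k + 1 ≤ 2 ^ m)
    (E : (Fin n → Bool) → (Fin n → Bool) → Prop) :
    (∃ g : (Fin n → Bool) → (Fin m → Bool),
        (∀ a b : Fin n → Bool, g a = g b → num (g a) < k → a = b) ∧
        (∀ a b : Fin n → Bool, E a b → num (g a) < k ∨ num (g b) < k))
      ↔
    (∃ W : Finset (Fin n → Bool), W.card ≤ k ∧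
        ∀ a b : Fin n → Bool, E a b → a ∈ W ∨ b ∈ W) := by
  constructor
  · rintro ⟨g, h1, h2⟩
    classical
    refine ⟨Finset.univ.filter (fun a => num (g a) < k), ?_, fun a b hab => by
      simpa using h2 a b hab⟩
    have : Finset.card (Finset.univ.filter (fun a => num (g a) < k))
        ≤ Fintype.card (Fin k) := by
      apply Finset.card_le_card_of_injOn
        (f := fun a => if h : num (g a) < k then (⟨num (g a), h⟩ : Fin k) else ⟨0, hk⟩)
      · intro a _; exact Finset.mem_univ _
      · intro a ha b hb hfab
        simp only [Finset.mem_coe, Finset.mem_filter] at ha hb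
        simp only [dif_pos ha.2, dif_pos hb.2] at hfab
        have hnum : num (g a) = num (g b) := congrArg Fin.val hfab
        have hg : g a = g b := by
          apply (numEquiv m).injective
          apply Fin.ext
          rw [← num_eq_numEquiv, ← num_eq_numEquiv]
          exact hnum
        exact h1 a b hg ha.2
    simpa using this
  · rintro ⟨W, hWk, hW⟩
    classical
    have hcard : Fintype.card W ≤ Fintype.card (Fin k) := by
      simpa using hWk
    obtain ⟨f⟩ := Function.Embedding.nonempty_of_card_le hcard
    refine ⟨fun a => if h : a ∈ W then
        (numEquiv m).symm ⟨f ⟨a, h⟩, lt_of_lt_of_le (f ⟨a, h⟩).isLt (by omega)⟩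
      else (numEquiv m).symm ⟨k, by omega⟩, ?_, ?_⟩
    · intro a b hgab hlt
      by_cases ha : a ∈ W
      · by_cases hb : b ∈ W
        · simp only [dif_pos ha, dif_pos hb] at hgab
          have h1 := (numEquiv m).symm.injective hgab
          have h2 : (f ⟨a, ha⟩ : ℕ) = (f ⟨b, hb⟩ : ℕ) := by simpa using h1
          have h3 := f.injective (Fin.ext h2)
          exact congrArg Subtype.val h3
        · simp only [dif_pos ha, dif_neg hb] at hgab
          have h1 := (numEquiv m).symm.injective hgab
          have h2 : (f ⟨a, ha⟩ : ℕ) = k := by simpa using h1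
          have := (f ⟨a, ha⟩).isLt
          omega
      · simp only [dif_neg ha, num_numEquiv_symm] at hlt
        omega
    · intro a b hab
      rcases hW a b hab with h | h
      · left; simp only [dif_pos h, num_numEquiv_symm]; exact (f ⟨a, h⟩).isLt
      · right; simp only [dif_pos h, num_numEquiv_symm]; exact (f ⟨b, h⟩).isLt
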